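/- In the ring ℚ[[z]] of formal power series, exp( Σ_{k≥1} c_{k,k}·z^k ) = Σ_{k≥0} (6k)!/((2k)!·(3k)!) · z^k/72^k. -/

import Mathlib

open PowerSeries Finset

/-- `q : ℕ → ℕ → ℤ` satisfies the defining recursion. -/
def IsQ (q : ℕ → ℕ → ℤ) : Prop :=
  q 0 0 = 1 ∧
  (∀ k j, k < j → q k j = 0) ∧
  (∀ k j, 1 ≤ k → j ≤ k →
    q k j = (2 * (k : ℤ) + 4 * (j : ℤ) - 2) * (if j = 0 then 0 else q (k - 1) (j - 1))
      + ((j : ℤ) + 1) * q (k - 1) j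
      + ∑ m ∈ Finset.range k, ∑ l ∈ Finset.range j, q m l * q (k - 1 - m) (j - 1 - l))

/-- `c : ℕ → ℕ → ℚ` satisfies the defining relations: `c k j = 0` for `j > k`, and
`q k j = (2k+4j)·c k j + (j+1)·c k (j+1)` for all `k ≥ 1` and `0 ≤ j ≤ k`. -/
def IsC (q : ℕ → ℕ → ℤ) (c : ℕ → ℕ → ℚ) : Prop :=
  (∀ k j, k < j → c k j = 0) ∧
  (∀ k j, 1 ≤ k → j ≤ k →
    (q k j : ℚ) = (2 * (k : ℚ) + 4 * (j : ℚ)) * c k j + ((j : ℚ) + 1) * c k (j + 1))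

/-- Composition (substitution) `g(h(z))` of formal power series over `ℚ`; this is the
usual substitution whenever `h` has zero constant term. -/
noncomputable def comp (g h : PowerSeries ℚ) : PowerSeries ℚ :=
  PowerSeries.mk fun n =>
    ∑ k ∈ Finset.range (n + 1), PowerSeries.coeff k g * PowerSeries.coeff n (h ^ k)

/-- The exponential `exp(f)` of a formal power series `f` with zero constant term,
obtained by substituting `f` into the exponential series. -/
noncomputable def expComp (f : PowerSeries ℚ) : PowerSeries ℚ :=
  comp (PowerSeries.exp ℚ) f

/-! For `Q = ∑ q_{k,k} zᵏ` the diagonal of the recursion for `q` is the Riccati equation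
`Q = 1 + z (6 z Q' + 4 Q + Q²)`, and `q_{k,k} = 6k c_{k,k}` says `6 z L' = Q - 1` for
`L = ∑_{k ≥ 1} c_{k,k} zᵏ`. Hence `E = exp L` satisfies `6 θE = (Q - 1) E` with `θ = z d/dz`;
applying `θ` once more and eliminating `Q` by the Riccati equation leaves the linear equation
`6 θE = z (36 θ²E + 36 θE + 5 E)`, that is `6 (n+1) e_{n+1} = (6n+1)(6n+5) eₙ`, which is also the
recursion satisfied by `(6n)! / ((2n)! (3n)! 72ⁿ)`. -/

lemma coeff_pow_eq_zero_of_lt {R : Type*} [CommSemiring R] {f : R⟦X⟧} (hf : constantCoeff f = 0)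
    {n k : ℕ} (h : n < k) : coeff n (f ^ k) = 0 :=
  X_pow_dvd_iff.mp (pow_dvd_pow_of_dvd (X_dvd_iff.mpr hf) k) n h

lemma comp_eq_subst (g : ℚ⟦X⟧) {h : ℚ⟦X⟧} (hh : constantCoeff h = 0) : comp g h = g.subst h := by
  ext n
  rw [comp, coeff_mk, coeff_subst' (HasSubst.of_constantCoeff_zero' hh),
    finsum_eq_finsetSum_of_support_subset (s := range (n + 1))]
  · simp only [smul_eq_mul]
  · intro k hk
    by_contra hkn
    simp only [coe_range, Set.mem_Iio, not_lt] at hkn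
    simp [coeff_pow_eq_zero_of_lt hh (Nat.lt_of_succ_le hkn)] at hk

lemma constantCoeff_expComp (f : ℚ⟦X⟧) : constantCoeff (expComp f) = 1 := by
  rw [← coeff_zero_eq_constantCoeff_apply]
  simp [expComp, comp]

lemma derivative_expComp {f : ℚ⟦X⟧} (hf : constantCoeff f = 0) :
    d⁄dX ℚ (expComp f) = d⁄dX ℚ f * expComp f := by
  rw [expComp, comp_eq_subst _ hf, derivative_subst (HasSubst.of_constantCoeff_zero' hf),
    derivative_exp, mul_comm]

section Coefficients

variable {R : Type*} [CommRing R]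

lemma coeff_X_mul_derivative (f : R⟦X⟧) (n : ℕ) :
    coeff n (X * d⁄dX R f) = n * coeff n f := by
  cases n with
  | zero => simp
  | succ n => rw [coeff_succ_X_mul, coeff_derivative, mul_comm]; push_cast; rfl

lemma coeff_ofNat_mul (a : ℕ) [a.AtLeastTwo] (f : R⟦X⟧) (n : ℕ) :
    coeff n ((no_index (OfNat.ofNat a) : R⟦X⟧) * f) = OfNat.ofNat a * coeff n f := by
  rw [← map_ofNat C, coeff_C_mul]

end Coefficients

noncomputable def diagSeries (q : ℕ → ℕ → ℤ) : ℚ⟦X⟧ := PowerSeries.mk fun k => (q k k : ℚ)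

namespace IsQ

variable {q : ℕ → ℕ → ℤ}

lemma diag_succ (hq : IsQ q) (k : ℕ) :
    q (k + 1) (k + 1) = (6 * (k : ℤ) + 4) * q k k
      + ∑ m ∈ range (k + 1), q m m * q (k - m) (k - m) := by
  obtain ⟨-, hzero, hrec⟩ := hq
  -- `q m l` vanishes for `m < l` and `q (k - m) (k - l)` for `l < m`.
  have hoff : ∀ m ∈ range (k + 1), ∑ l ∈ range (k + 1), q m l * q (k - m) (k - l)
      = q m m * q (k - m) (k - m) := by
    intro m hm
    refine sum_eq_single_of_mem m hm fun l _ hlm => ?_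
    rcases lt_or_gt_of_ne hlm with hlt | hgt
    · rw [hzero (k - m) (k - l) (by grind), mul_zero]
    · rw [hzero m l hgt, zero_mul]
  rw [hrec (k + 1) (k + 1) (by omega) le_rfl, if_neg (by omega)]
  simp only [Nat.add_sub_cancel]
  rw [hzero k (k + 1) (by omega), sum_congr rfl hoff]
  push_cast
  ring

lemma diagSeries_eq (hq : IsQ q) :
    diagSeries q = 1 + X * (6 * (X * d⁄dX ℚ (diagSeries q)) + 4 * diagSeries q
      + diagSeries q ^ 2) := by
  ext n
  cases n with
  | zero => simp [diagSeries, hq.1]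
  | succ n =>
    rw [map_add, coeff_succ_X_mul, coeff_one, if_neg n.succ_ne_zero, zero_add, map_add, map_add,
      coeff_ofNat_mul, coeff_ofNat_mul, coeff_X_mul_derivative, pow_two, coeff_mul,
      Nat.sum_antidiagonal_eq_sum_range_succ_mk]
    simp only [diagSeries, coeff_mk, hq.diag_succ]
    push_cast
    ring

end IsQ

namespace IsC

variable {q : ℕ → ℕ → ℤ} {c : ℕ → ℕ → ℚ}

lemma six_mul_diag (hc : IsC q c) {k : ℕ} (hk : 1 ≤ k) :
    (q k k : ℚ) = 6 * k * c k k := by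
  rw [hc.2 k k hk le_rfl, hc.1 k (k + 1) (by omega)]
  ring

lemma six_X_mul_derivative_diag (hq : IsQ q) (hc : IsC q c) :
    6 * (X * d⁄dX ℚ (PowerSeries.mk fun k => if k = 0 then 0 else c k k)) = diagSeries q - 1 := by
  ext n
  rw [coeff_ofNat_mul, coeff_X_mul_derivative, map_sub, coeff_one, diagSeries, coeff_mk, coeff_mk]
  rcases Nat.eq_zero_or_pos n with rfl | hn
  · simp [hq.1]
  · rw [if_neg hn.ne', if_neg hn.ne', hc.six_mul_diag hn]
    ring

end IsC

lemma euler_ode_of_riccati {R : Type*} [CommRing R] {Q E : R⟦X⟧}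
    (hQ : Q = 1 + X * (6 * (X * d⁄dX R Q) + 4 * Q + Q ^ 2))
    (hE : 6 * (X * d⁄dX R E) = (Q - 1) * E) :
    6 * (X * d⁄dX R E)
      = X * (36 * (X * d⁄dX R (X * d⁄dX R E)) + 36 * (X * d⁄dX R E) + 5 * E) := by
  have hE' : 6 * (X * d⁄dX R (X * d⁄dX R E))
      = X * d⁄dX R Q * E + (Q - 1) * (X * d⁄dX R E) := by
    have h6 : d⁄dX R (6 : R⟦X⟧) = 0 := by exact_mod_cast (d⁄dX R).map_natCast 6
    have := congrArg (X * d⁄dX R ·) hE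
    simp only [Derivation.leibniz, map_sub, Derivation.map_one_eq_zero, derivative_X, h6,
      smul_eq_mul] at this ⊢
    linear_combination this
  linear_combination (-6 * X) * hE' + (1 - X * (Q - 1) - 6 * X) * hE + E * hQ

noncomputable def hypergeomCoeff (k : ℕ) : ℚ :=
  (Nat.factorial (6 * k) : ℚ) / ((Nat.factorial (2 * k) : ℚ) * (Nat.factorial (3 * k) : ℚ) * 72 ^ k)

lemma hypergeomCoeff_succ (m : ℕ) :
    hypergeomCoeff (m + 1) = (6 * m + 1) * (6 * m + 5) / (6 * (m + 1)) * hypergeomCoeff m := by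
  simp only [hypergeomCoeff, show 6 * (m + 1) = 6 * m + 6 by ring,
    show 2 * (m + 1) = 2 * m + 2 by ring, show 3 * (m + 1) = 3 * m + 3 by ring, Nat.factorial_succ]
  push_cast
  field_simp
  ring

lemma eq_mk_hypergeomCoeff_of_euler_ode {F : ℚ⟦X⟧} (h0 : constantCoeff F = 1)
    (hF : 6 * (X * d⁄dX ℚ F)
      = X * (36 * (X * d⁄dX ℚ (X * d⁄dX ℚ F)) + 36 * (X * d⁄dX ℚ F) + 5 * F)) :
    F = PowerSeries.mk hypergeomCoeff := by
  have hrec (n : ℕ) : 6 * (n + 1) * coeff (n + 1) F = (6 * n + 1) * (6 * n + 5) * coeff n F := by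
    have := congrArg (coeff (n + 1)) hF
    rw [coeff_succ_X_mul, map_add, map_add] at this
    simp only [coeff_ofNat_mul, coeff_X_mul_derivative] at this
    push_cast at this
    linear_combination this
  ext n
  rw [coeff_mk]
  induction n with
  | zero => simp [h0, hypergeomCoeff]
  | succ n ih =>
    rw [hypergeomCoeff_succ, ← ih]
    field_simp
    linear_combination hrec n

/-- In `ℚ⟦z⟧`, `exp(∑_{k≥1} c_{k,k} zᵏ) = ∑_{k≥0} (6k)!/((2k)!·(3k)!) · zᵏ/72ᵏ`. -/
theorem statement10 (q : ℕ → ℕ → ℤ) (hq : IsQ q) (c : ℕ → ℕ → ℚ) (hc : IsC q c) :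
    expComp (PowerSeries.mk fun k => if k = 0 then 0 else c k k) =
      PowerSeries.mk fun k =>
        (Nat.factorial (6 * k) : ℚ) /
          ((Nat.factorial (2 * k) : ℚ) * (Nat.factorial (3 * k) : ℚ) * 72 ^ k) := by
  set L : ℚ⟦X⟧ := PowerSeries.mk fun k => if k = 0 then 0 else c k k
  have hL0 : constantCoeff L = 0 := by simp [L, ← coeff_zero_eq_constantCoeff_apply]
  have hE : 6 * (X * d⁄dX ℚ (expComp L)) = (diagSeries q - 1) * expComp L := by
    rw [derivative_expComp hL0, ← hc.six_X_mul_derivative_diag hq]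
    ring
  exact eq_mk_hypergeomCoeff_of_euler_ode (constantCoeff_expComp L)
    (euler_ode_of_riccati hq.diagSeries_eq hE)
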